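/- arXiv:1912.01339 — 2 statements merged into one kernel-verified Lean document; each statement's English description precedes it below -/
import Mathlib

section
/- Let F : T → X be strongly measurable and B1-integrable on T with respect to μ (hence B1-integrable on every A ∈ 𝒜, with integral denoted ∫_A F dμ). Then for every ε > 0 there exists a countable measurable partition P of T such that for every countable measurable partition {E_j}_{j∈ℕ} of T finer than P and every choice of points t_j ∈ E_j, one has ∑_{j} ‖F(t_j) μ(E_j) − ∫_{E_j} F dμ‖ ≤ ε. -/
open MeasureTheory Filter

/-- A countable measurable partition of the set `A`: a countable family of pairwise
disjoint measurable sets whose union is `A` (empty pieces are allowed so that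
finite partitions are covered; empty pieces contribute nothing). -/
structure MPartition {T : Type*} [MeasurableSpace T] (A : Set T) where
  piece : ℕ → Set T
  measurable : ∀ n, MeasurableSet (piece n)
  disj : Pairwise (Function.onFun Disjoint piece)
  cover : (⋃ n, piece n) = A

/-- `P'` is finer than `P` if every piece of `P'` is contained in some piece of `P`. -/
def MPartition.Finer {T : Type*} [MeasurableSpace T] {A : Set T}
    (P' P : MPartition A) : Prop :=
  ∀ j, ∃ n, P'.piece j ⊆ P.piece n

/-- A choice of tag points, one in each nonempty piece of the partition. -/
def MPartition.IsTagging {T : Type*} [MeasurableSpace T] {A : Set T}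
    (P : MPartition A) (t : ℕ → T) : Prop :=
  ∀ n, (P.piece n).Nonempty → t n ∈ P.piece n

/-- `F : T → X` is `B₁`-integrable on `A` w.r.t. the (finite, nonnegative) measure `μ`,
with integral `I`. -/
def B1IntegralOn {T X : Type*} [MeasurableSpace T] [NormedAddCommGroup X]
    [NormedSpace ℝ X] (F : T → X) (μ : Measure T) (A : Set T) (I : X) : Prop :=
  ∀ ε > (0 : ℝ), ∃ P₀ : MPartition A, ∀ P : MPartition A, P.Finer P₀ →
    ∀ t : ℕ → T, P.IsTagging t →
      limsup (fun n => ‖(∑ i ∈ Finset.range n, (μ (P.piece i)).toReal • F (t i)) - I‖)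
        atTop ≤ ε

/-- `f : T → ℝ` is `B₂`-integrable on `A` w.r.t. the countably additive vector
measure `m`, with integral `I`. -/
def B2IntegralOn {T X : Type*} [MeasurableSpace T] [NormedAddCommGroup X]
    [NormedSpace ℝ X] (f : T → ℝ) (m : VectorMeasure T X) (A : Set T) (I : X) : Prop :=
  ∀ ε > (0 : ℝ), ∃ P₀ : MPartition A, ∀ P : MPartition A, P.Finer P₀ →
    ∀ t : ℕ → T, P.IsTagging t →
      limsup (fun n => ‖(∑ i ∈ Finset.range n, f (t i) • m (P.piece i)) - I‖)
        atTop ≤ ε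

/-!
The strong measurability of `F` gives a countable dense set `{xₘ}` in its range, and hence a
countable measurable partition `P₀` of `T` on whose `m`-th piece `F` stays within `δ` of `xₘ`.
On a piece `E` of a finer partition, `F` is within `δ` of a single `xₘ`; every Riemann sum of `F`
over `E` is then within `δ μ(E)` of `μ(E) xₘ`, and so is its `B₁`-limit `∫_E F dμ`. Hence each
term `‖F(t) μ(E) - ∫_E F dμ‖` is at most `2δ μ(E)`, and the sum is at most `2δ μ(T)`.
-/

open Set Topology

namespace MPartition

variable {T X : Type*} [MeasurableSpace T] [NormedAddCommGroup X] [NormedSpace ℝ X]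
  {A : Set T}

def riemannSum (μ : Measure T) (F : T → X) (P : MPartition A) (t : ℕ → T) (n : ℕ) : X :=
  ∑ i ∈ Finset.range n, (μ (P.piece i)).toReal • F (t i)

theorem hasSum_measure_toReal (μ : Measure T) [IsFiniteMeasure μ] (P : MPartition A) :
    HasSum (fun i => (μ (P.piece i)).toReal) (μ A).toReal := by
  have hμ : ∑' i, μ (P.piece i) = μ A := by rw [← measure_iUnion P.disj P.measurable, P.cover]
  rw [← hμ, ENNReal.tsum_toReal_eq fun i => measure_ne_top μ _]
  exact ENNReal.hasSum_toReal (hμ ▸ measure_ne_top μ A)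

theorem sum_measure_toReal_le (μ : Measure T) [IsFiniteMeasure μ] (P : MPartition A) (n : ℕ) :
    ∑ i ∈ Finset.range n, (μ (P.piece i)).toReal ≤ (μ A).toReal :=
  sum_le_hasSum _ (fun _ _ => ENNReal.toReal_nonneg) (P.hasSum_measure_toReal μ)

theorem exists_isTagging [Nonempty T] (P : MPartition A) : ∃ t, P.IsTagging t := by
  classical
  exact ⟨fun n => if h : (P.piece n).Nonempty then h.some else Classical.arbitrary T,
    fun n hn => by simp only [dif_pos hn]; exact hn.some_mem⟩

theorem IsTagging.norm_measure_smul_sub_le {P : MPartition A} {t : ℕ → T} (ht : P.IsTagging t)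
    (μ : Measure T) {F : T → X} {x : X} {δ : ℝ} {i : ℕ}
    (hx : ∀ s ∈ P.piece i, ‖F s - x‖ ≤ δ) :
    ‖(μ (P.piece i)).toReal • (F (t i) - x)‖ ≤ δ * (μ (P.piece i)).toReal := by
  rcases (P.piece i).eq_empty_or_nonempty with hempty | hne
  · simp [hempty]
  · rw [norm_smul, Real.norm_of_nonneg ENNReal.toReal_nonneg, mul_comm]
    exact mul_le_mul_of_nonneg_right (hx _ (ht i hne)) ENNReal.toReal_nonneg

theorem IsTagging.norm_riemannSum_sub_smul_le {P : MPartition A} {t : ℕ → T} (ht : P.IsTagging t)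
    (μ : Measure T) {F : T → X} {x : X} {δ : ℝ} (hx : ∀ s ∈ A, ‖F s - x‖ ≤ δ) (n : ℕ) :
    ‖P.riemannSum μ F t n - (∑ i ∈ Finset.range n, (μ (P.piece i)).toReal) • x‖ ≤
      δ * ∑ i ∈ Finset.range n, (μ (P.piece i)).toReal := by
  have hpiece : ∀ i, ∀ s ∈ P.piece i, ‖F s - x‖ ≤ δ := fun i s hs =>
    hx s (P.cover ▸ mem_iUnion_of_mem i hs)
  calc ‖P.riemannSum μ F t n - (∑ i ∈ Finset.range n, (μ (P.piece i)).toReal) • x‖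
      = ‖∑ i ∈ Finset.range n, (μ (P.piece i)).toReal • (F (t i) - x)‖ := by
        simp only [riemannSum, Finset.sum_smul, smul_sub, Finset.sum_sub_distrib]
    _ ≤ ∑ i ∈ Finset.range n, δ * (μ (P.piece i)).toReal :=
        norm_sum_le_of_le _ fun i _ => ht.norm_measure_smul_sub_le μ (hpiece i)
    _ = δ * ∑ i ∈ Finset.range n, (μ (P.piece i)).toReal := (Finset.mul_sum ..).symm

end MPartition

theorem MeasureTheory.StronglyMeasurable.exists_mpartition_norm_sub_lt {T X : Type*}
    [MeasurableSpace T] [NormedAddCommGroup X] {F : T → X} (hF : StronglyMeasurable F)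
    {δ : ℝ} (hδ : 0 < δ) :
    ∃ (P : MPartition (univ : Set T)) (x : ℕ → X), ∀ n, ∀ s ∈ P.piece n, ‖F s - x n‖ < δ := by
  obtain ⟨c, hc, hFc⟩ := hF.isSeparable_range
  obtain ⟨x, hx⟩ := (hc.insert 0).exists_eq_range (insert_nonempty _ _)
  set B : ℕ → Set T := fun n => {s | ‖F s - x n‖ < δ}
  have hB : ∀ n, MeasurableSet (B n) := fun n =>
    (hF.sub stronglyMeasurable_const).norm.measurable measurableSet_Iio
  have hcover : ⋃ n, B n = univ := by
    refine eq_univ_of_forall fun s => ?_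
    have hdense : F s ∈ closure (range x) :=
      hx ▸ closure_mono (subset_insert _ _) (hFc (mem_range_self s))
    obtain ⟨_, ⟨n, rfl⟩, hn⟩ := Metric.mem_closure_iff.mp hdense δ hδ
    exact mem_iUnion.2 ⟨n, by simpa [B, dist_eq_norm] using hn⟩
  exact ⟨⟨disjointed B, .disjointed hB, disjoint_disjointed B, by rw [iUnion_disjointed, hcover]⟩,
    x, fun n s hs => disjointed_subset B n hs⟩

theorem B1IntegralOn.norm_sub_smul_le {T X : Type*} [MeasurableSpace T] [Nonempty T]
    [NormedAddCommGroup X] [NormedSpace ℝ X] {μ : Measure T} [IsFiniteMeasure μ]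
    {F : T → X} {A : Set T} {I x : X} {δ : ℝ} (hI : B1IntegralOn F μ A I)
    (hx : ∀ s ∈ A, ‖F s - x‖ ≤ δ) :
    ‖I - (μ A).toReal • x‖ ≤ δ * (μ A).toReal := by
  refine le_of_forall_pos_le_add fun ε hε => ?_
  obtain ⟨P, hP⟩ := hI ε hε
  obtain ⟨t, ht⟩ := P.exists_isTagging
  set c : ℕ → ℝ := fun n => ∑ i ∈ Finset.range n, (μ (P.piece i)).toReal
  have hlim : limsup (fun n => ‖P.riemannSum μ F t n - I‖) atTop ≤ ε :=
    hP P (fun j => ⟨j, subset_rfl⟩) t ht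
  have hc : Tendsto c atTop (𝓝 (μ A).toReal) := (P.hasSum_measure_toReal μ).tendsto_sum_nat
  have hclose := ht.norm_riemannSum_sub_smul_le μ hx
  have hlower : Tendsto (fun n => ‖I - (μ A).toReal • x‖ - δ * c n - ‖(c n - (μ A).toReal) • x‖)
      atTop (𝓝 (‖I - (μ A).toReal • x‖ - δ * (μ A).toReal)) := by
    have := ((tendsto_const_nhds (x := ‖I - (μ A).toReal • x‖)).sub (hc.const_mul δ)).sub
      (((hc.sub_const (μ A).toReal).smul_const x).norm)
    simpa using this
  have hupper : Tendsto (fun n => ‖I‖ + ‖c n • x‖ + δ * c n) atTop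
      (𝓝 (‖I‖ + ‖(μ A).toReal • x‖ + δ * (μ A).toReal)) :=
    (tendsto_const_nhds.add (hc.smul_const x).norm).add (hc.const_mul δ)
  -- Needed because the `limsup` of a real sequence that is unbounded above is the junk value `0`.
  have hbdd : IsBoundedUnder (· ≤ ·) atTop (fun n => ‖P.riemannSum μ F t n - I‖) :=
    hupper.isBoundedUnder_le.mono_le <| Eventually.of_forall fun n => by
      have hS := norm_le_insert' (P.riemannSum μ F t n) (c n • x)
      have hSI := norm_sub_le (P.riemannSum μ F t n) I
      linarith [hclose n]
  have hle : ∀ n, ‖I - (μ A).toReal • x‖ - δ * c n - ‖(c n - (μ A).toReal) • x‖ ≤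
      ‖P.riemannSum μ F t n - I‖ := fun n => by
    have h₁ := norm_sub_le_norm_sub_add_norm_sub I (P.riemannSum μ F t n) ((μ A).toReal • x)
    have h₂ := norm_sub_le_norm_sub_add_norm_sub (P.riemannSum μ F t n) (c n • x) ((μ A).toReal • x)
    rw [← sub_smul] at h₂
    linarith [hclose n, norm_sub_rev (P.riemannSum μ F t n) I]
  have hlimit := (hlower.limsup_eq.symm.le.trans
    (limsup_le_limsup (Eventually.of_forall hle) hlower.isBoundedUnder_ge.isCoboundedUnder_le
      hbdd)).trans hlim
  linarith

theorem statement0_general {T X : Type*} [MeasurableSpace T] [NormedAddCommGroup X]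
    [NormedSpace ℝ X] (μ : Measure T) [IsFiniteMeasure μ]
    (F : T → X) (hF : StronglyMeasurable F)
    (ν : Set T → X)
    (hν : ∀ A : Set T, MeasurableSet A → B1IntegralOn F μ A (ν A)) :
    ∀ ε > (0 : ℝ), ∃ P₀ : MPartition (Set.univ : Set T),
      ∀ P : MPartition (Set.univ : Set T), P.Finer P₀ →
        ∀ t : ℕ → T, P.IsTagging t →
          ∀ n : ℕ,
            ∑ j ∈ Finset.range n,
              ‖(μ (P.piece j)).toReal • F (t j) - ν (P.piece j)‖ ≤ ε := by
  intro ε hε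
  set M := (μ univ).toReal
  set δ := ε / (2 * (M + 1))
  have hδ : 0 < δ := by positivity
  obtain ⟨P₀, x, hP₀⟩ := hF.exists_mpartition_norm_sub_lt hδ
  refine ⟨P₀, fun P hP t ht n => ?_⟩
  have : Nonempty T := ⟨t 0⟩
  have hterm : ∀ j, ‖(μ (P.piece j)).toReal • F (t j) - ν (P.piece j)‖ ≤
      2 * δ * (μ (P.piece j)).toReal := fun j => by
    obtain ⟨m, hm⟩ := hP j
    have hx : ∀ s ∈ P.piece j, ‖F s - x m‖ ≤ δ := fun s hs => (hP₀ m s (hm hs)).le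
    calc ‖(μ (P.piece j)).toReal • F (t j) - ν (P.piece j)‖
        ≤ ‖(μ (P.piece j)).toReal • (F (t j) - x m)‖ +
            ‖ν (P.piece j) - (μ (P.piece j)).toReal • x m‖ := by
          rw [smul_sub, norm_sub_rev (ν _)]; exact norm_sub_le_norm_sub_add_norm_sub ..
      _ ≤ δ * (μ (P.piece j)).toReal + δ * (μ (P.piece j)).toReal :=
          add_le_add (ht.norm_measure_smul_sub_le μ hx)
            ((hν _ (P.measurable j)).norm_sub_smul_le hx)
      _ = 2 * δ * (μ (P.piece j)).toReal := by ring
  calc ∑ j ∈ Finset.range n, ‖(μ (P.piece j)).toReal • F (t j) - ν (P.piece j)‖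
      ≤ 2 * δ * ∑ j ∈ Finset.range n, (μ (P.piece j)).toReal := by
        rw [Finset.mul_sum]; exact Finset.sum_le_sum fun j _ => hterm j
    _ ≤ 2 * δ * M := by gcongr; exact P.sum_measure_toReal_le μ n
    _ ≤ 2 * δ * (M + 1) := by linarith
    _ = ε := by
        have : M + 1 ≠ 0 := by linarith [(ENNReal.toReal_nonneg : 0 ≤ M)]
        simp only [δ]; field_simp

/-- Theorem 1 / \cite[Theorem 3.14]{cdpmsxweber}.
If the strongly measurable `F` is `B₁`-integrable on `T` (hence on every
measurable `A`, with integral `ν A = ∫_A F dμ`), then for every `ε > 0` there is a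
countable measurable partition `P₀` of `T` such that for every finer countable
measurable partition `{E_j}` and every choice of tags `t_j ∈ E_j`,
`∑_j ‖F (t_j) μ(E_j) − ∫_{E_j} F dμ‖ ≤ ε` (expressed via its partial sums, the
summands being nonnegative). -/
theorem statement0 {T X : Type*} [MeasurableSpace T] [NormedAddCommGroup X]
    [NormedSpace ℝ X] (μ : Measure T) [IsFiniteMeasure μ]
    (F : T → X) (hF : StronglyMeasurable F)
    (ν : Set T → X)
    (hν : ∀ A : Set T, MeasurableSet A → B1IntegralOn F μ A (ν A))
    (hT : B1IntegralOn F μ Set.univ (ν Set.univ)) :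
    ∀ ε > (0 : ℝ), ∃ P₀ : MPartition (Set.univ : Set T),
      ∀ P : MPartition (Set.univ : Set T), P.Finer P₀ →
        ∀ t : ℕ → T, P.IsTagging t →
          ∀ n : ℕ,
            ∑ j ∈ Finset.range n,
              ‖(μ (P.piece j)).toReal • F (t j) - ν (P.piece j)‖ ≤ ε :=
  statement0_general μ F hF ν hν
end

section
/- (Girsanov-type theorem: martingale property under the new measure.) Let (T, 𝒜, μ) be a finite measure space, X a Banach space, Φ : T → X Bochner integrable, and let M be the X-valued measure M(A) := ∫_A Φ dμ. Fix S > 0, q > 0, and for each s ∈ [0,S] let w_s : T → ℝ be measurable and bounded; set w̃_s := w_s + s·q, and let ℰ_s denote the σ-algebra generated by {w_r : r ≤ s}. Let g_s : ℝ → ℝ be Borel measurable for each s ∈ [0,S], and assume: (i) for each s ∈ [0,S] the functions t ↦ g_s(w̃_s(t)) • Φ(t) and t ↦ w̃_s(t) g_s(w̃_s(t)) • Φ(t) are Bochner integrable; (ii) the process (g_s(w̃_s))_{s∈[0,S]} is a martingale with respect to M, i.e. for all 0 ≤ s < v ≤ S and every E ∈ ℰ_s, ∫_E g_v(w̃_v(t))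 • Φ(t) dμ = ∫_E g_s(w̃_s(t)) • Φ(t) dμ; (iii) the process (w̃_s g_s(w̃_s))_{s∈[0,S]} is a martingale with respect to M, i.e. for all 0 ≤ s < v ≤ S and every E ∈ ℰ_s, ∫_E w̃_v(t) g_v(w̃_v(t)) • Φ(t) dμ = ∫_E w̃_s(t) g_s(w̃_s(t)) • Φ(t) dμ. Define the X-valued measure Q(A) := ∫_A g_S(w̃_S(t)) • Φ(t) dμ. Then (w̃_s)_{s∈[0,S]} is a martingale with respect to Q: for all 0 ≤ s < v ≤ S and every E ∈ ℰ_s, ∫_E w̃_v(t) g_S(w̃_S(t)) • Φ(t) dμ = ∫_E w̃_s(t) g_S(w̃_S(t)) • Φ(t) dμ. -/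
/-!
Under `M`, the densities `g_S(w̃_S)` and `g_u(w̃_u)` have the same integrals over every set of `ℰ_u`
by (ii), so they have the same conditional expectation given `ℰ_u`. Since `w̃_u` is bounded and
`ℰ_u`-measurable it can be pulled out of that conditional expectation, which gives
`∫_E w̃_u g_S(w̃_S) dM = ∫_E w̃_u g_u(w̃_u) dM` for `E ∈ ℰ_u`. Applying this at `u = v` and `u = s`
and using (iii) in between proves the claim.
-/

open MeasureTheory

section PullOut

variable {T X : Type*} {m m₀ : MeasurableSpace T} {μ : Measure T}
  [NormedAddCommGroup X] [NormedSpace ℝ X]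

theorem setIntegral_smul_eq_of_forall_setIntegral_eq (hm : m ≤ m₀) [SigmaFinite (μ.trim hm)]
    {F G : T → X} (hF : Integrable F μ) (hG : Integrable G μ)
    (hFG : ∀ A, MeasurableSet[m] A → ∫ t in A, F t ∂μ = ∫ t in A, G t ∂μ)
    {f : T → ℝ} (hf : StronglyMeasurable[m] f)
    (hfF : Integrable (f • F) μ) (hfG : Integrable (f • G) μ)
    {E : Set T} (hE : MeasurableSet[m] E) :
    ∫ t in E, f t • F t ∂μ = ∫ t in E, f t • G t ∂μ := by
  by_cases hX : CompleteSpace X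
  swap
  · simp [integral, hX]
  have hcondExp : μ[F | m] =ᵐ[μ] μ[G | m] :=
    ae_eq_condExp_of_forall_setIntegral_eq hm hG (fun _ _ _ ↦ integrable_condExp.integrableOn)
      (fun A hA _ ↦ by rw [setIntegral_condExp hm hF hA, hFG A hA])
      stronglyMeasurable_condExp.aestronglyMeasurable
  have hpullF := condExp_smul_of_aestronglyMeasurable_left hf.aestronglyMeasurable hfF hF
  have hpullG := condExp_smul_of_aestronglyMeasurable_left hf.aestronglyMeasurable hfG hG
  calc ∫ t in E, f t • F t ∂μ = ∫ t in E, (μ[f • F | m]) t ∂μ :=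
        (setIntegral_condExp hm hfF hE).symm
    _ = ∫ t in E, (μ[f • G | m]) t ∂μ := by
        refine setIntegral_congr_ae (hm E hE) ?_
        filter_upwards [hpullF, hpullG, hcondExp] with t hFt hGt ht _
        simp only [hFt, hGt, Pi.smul_apply', ht]
    _ = ∫ t in E, f t • G t ∂μ := setIntegral_condExp hm hfG hE

end PullOut

section NaturalSigma

variable {T : Type*}

abbrev naturalSigma (w : ℝ → T → ℝ) (s : ℝ) : MeasurableSpace T :=
  ⨆ r ∈ Set.Icc (0 : ℝ) s, MeasurableSpace.comap (w r) inferInstance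

theorem naturalSigma_mono (w : ℝ → T → ℝ) {s v : ℝ} (hsv : s ≤ v) :
    naturalSigma w s ≤ naturalSigma w v :=
  biSup_mono fun _ hr ↦ ⟨hr.1, hr.2.trans hsv⟩

theorem naturalSigma_le [MeasurableSpace T] {w : ℝ → T → ℝ} {S : ℝ}
    (hw : ∀ r ∈ Set.Icc (0 : ℝ) S, Measurable (w r)) {s : ℝ} (hs : s ≤ S) :
    naturalSigma w s ≤ ‹MeasurableSpace T› :=
  iSup₂_le fun r hr ↦ (hw r ⟨hr.1, hr.2.trans hs⟩).comap_le

theorem measurable_naturalSigma (w : ℝ → T → ℝ) {s : ℝ} (hs : 0 ≤ s) :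
    Measurable[naturalSigma w s] (w s) :=
  Measurable.of_comap_le <|
    le_biSup (fun r ↦ MeasurableSpace.comap (w r) inferInstance) ⟨hs, le_rfl⟩

end NaturalSigma

theorem statement9_general {T : Type*} [MeasurableSpace T] (μ : Measure T)
    [IsFiniteMeasure μ]
    {X : Type*} [NormedAddCommGroup X] [NormedSpace ℝ X]
    (Φ : T → X)
    (S q : ℝ)
    (w : ℝ → T → ℝ) (hw : ∀ s ∈ Set.Icc (0 : ℝ) S, Measurable (w s))
    (hwb : ∀ s ∈ Set.Icc (0 : ℝ) S, ∃ C : ℝ, ∀ t, |w s t| ≤ C)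
    (g : ℝ → ℝ → ℝ)
    -- (i) integrability
    (hint : ∀ s ∈ Set.Icc (0 : ℝ) S,
      Integrable (fun t => g s (w s t + s * q) • Φ t) μ)
    (hint' : ∀ s ∈ Set.Icc (0 : ℝ) S,
      Integrable (fun t => ((w s t + s * q) * g s (w s t + s * q)) • Φ t) μ)
    -- (ii) `(g_s(w̃_s))_s` is a martingale with respect to `M`
    (hmart : ∀ s v : ℝ, 0 ≤ s → s < v → v ≤ S →
      ∀ E : Set T,
        MeasurableSet[⨆ r ∈ Set.Icc (0 : ℝ) s,
          MeasurableSpace.comap (w r) inferInstance] E →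
        ∫ t in E, g v (w v t + v * q) • Φ t ∂μ =
          ∫ t in E, g s (w s t + s * q) • Φ t ∂μ)
    -- (iii) `(w̃_s g_s(w̃_s))_s` is a martingale with respect to `M`
    (hmart' : ∀ s v : ℝ, 0 ≤ s → s < v → v ≤ S →
      ∀ E : Set T,
        MeasurableSet[⨆ r ∈ Set.Icc (0 : ℝ) s,
          MeasurableSpace.comap (w r) inferInstance] E →
        ∫ t in E, ((w v t + v * q) * g v (w v t + v * q)) • Φ t ∂μ =
          ∫ t in E, ((w s t + s * q) * g s (w s t + s * q)) • Φ t ∂μ) :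
    -- conclusion: `(w̃_s)_s` is a martingale with respect to `Q`
    ∀ s v : ℝ, 0 ≤ s → s < v → v ≤ S →
      ∀ E : Set T,
        MeasurableSet[⨆ r ∈ Set.Icc (0 : ℝ) s,
          MeasurableSpace.comap (w r) inferInstance] E →
        ∫ t in E, ((w v t + v * q) * g S (w S t + S * q)) • Φ t ∂μ =
          ∫ t in E, ((w s t + s * q) * g S (w S t + S * q)) • Φ t ∂μ := by
  intro s v hs hsv hvS E hE
  have hS : S ∈ Set.Icc (0 : ℝ) S := ⟨hs.trans (hsv.le.trans hvS), le_rfl⟩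
  have change_density : ∀ u ∈ Set.Icc (0 : ℝ) S, ∀ A, MeasurableSet[naturalSigma w u] A →
      ∫ t in A, ((w u t + u * q) * g S (w S t + S * q)) • Φ t ∂μ =
        ∫ t in A, ((w u t + u * q) * g u (w u t + u * q)) • Φ t ∂μ := by
    intro u hu A hA
    obtain ⟨C, hC⟩ := hwb u hu
    have hshift_meas : StronglyMeasurable[naturalSigma w u] (fun t ↦ w u t + u * q) :=
      ((measurable_naturalSigma w hu.1).add_const _).stronglyMeasurable
    simp only [mul_smul] at hint' ⊢
    refine setIntegral_smul_eq_of_forall_setIntegral_eq (naturalSigma_le hw hu.2) (hint S hS)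
      (hint u hu) (fun A hA ↦ ?_) hshift_meas ?_ (hint' u hu) hA
    · rcases hu.2.lt_or_eq with hlt | rfl
      exacts [hmart u S hu.1 hlt le_rfl A hA, rfl]
    · exact (hint S hS).bdd_smul (C + |u * q|)
        (hshift_meas.mono (naturalSigma_le hw hu.2)).aestronglyMeasurable
        (ae_of_all _ fun t ↦ (abs_add_le _ _).trans (add_le_add_left (hC t) _))
  calc ∫ t in E, ((w v t + v * q) * g S (w S t + S * q)) • Φ t ∂μ
      = ∫ t in E, ((w v t + v * q) * g v (w v t + v * q)) • Φ t ∂μ :=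
        change_density v ⟨hs.trans hsv.le, hvS⟩ E (naturalSigma_mono w hsv.le E hE)
    _ = ∫ t in E, ((w s t + s * q) * g s (w s t + s * q)) • Φ t ∂μ :=
        hmart' s v hs hsv hvS E hE
    _ = ∫ t in E, ((w s t + s * q) * g S (w S t + S * q)) • Φ t ∂μ :=
        (change_density s ⟨hs, hsv.le.trans hvS⟩ E hE).symm

/-- Theorem 7, Girsanov-type theorem: martingale property under
the new measure.  With `M A = ∫_A Φ dμ`, `w̃_s = w_s + s q`,
`ℰ_s = σ(w_r : 0 ≤ r ≤ s)` and `Q A = ∫_A g_S(w̃_S) • Φ dμ`, if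
(i) `g_s(w̃_s) • Φ` and `w̃_s g_s(w̃_s) • Φ` are Bochner integrable,
(ii) `(g_s(w̃_s))_s` is a martingale w.r.t. `M`, and
(iii) `(w̃_s g_s(w̃_s))_s` is a martingale w.r.t. `M`,
then `(w̃_s)_s` is a martingale with respect to `Q`. -/
theorem statement9 {T : Type*} [MeasurableSpace T] (μ : Measure T)
    [IsFiniteMeasure μ]
    {X : Type*} [NormedAddCommGroup X] [NormedSpace ℝ X]
    (Φ : T → X) (hΦ : Integrable Φ μ)
    (S q : ℝ) (hS : 0 < S) (hq : 0 < q)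
    (w : ℝ → T → ℝ) (hw : ∀ s ∈ Set.Icc (0 : ℝ) S, Measurable (w s))
    (hwb : ∀ s ∈ Set.Icc (0 : ℝ) S, ∃ C : ℝ, ∀ t, |w s t| ≤ C)
    (g : ℝ → ℝ → ℝ) (hg : ∀ s ∈ Set.Icc (0 : ℝ) S, Measurable (g s))
    -- (i) integrability
    (hint : ∀ s ∈ Set.Icc (0 : ℝ) S,
      Integrable (fun t => g s (w s t + s * q) • Φ t) μ)
    (hint' : ∀ s ∈ Set.Icc (0 : ℝ) S,
      Integrable (fun t => ((w s t + s * q) * g s (w s t + s * q)) • Φ t) μ)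
    -- (ii) `(g_s(w̃_s))_s` is a martingale with respect to `M`
    (hmart : ∀ s v : ℝ, 0 ≤ s → s < v → v ≤ S →
      ∀ E : Set T,
        MeasurableSet[⨆ r ∈ Set.Icc (0 : ℝ) s,
          MeasurableSpace.comap (w r) inferInstance] E →
        ∫ t in E, g v (w v t + v * q) • Φ t ∂μ =
          ∫ t in E, g s (w s t + s * q) • Φ t ∂μ)
    -- (iii) `(w̃_s g_s(w̃_s))_s` is a martingale with respect to `M`
    (hmart' : ∀ s v : ℝ, 0 ≤ s → s < v → v ≤ S →
      ∀ E : Set T,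
        MeasurableSet[⨆ r ∈ Set.Icc (0 : ℝ) s,
          MeasurableSpace.comap (w r) inferInstance] E →
        ∫ t in E, ((w v t + v * q) * g v (w v t + v * q)) • Φ t ∂μ =
          ∫ t in E, ((w s t + s * q) * g s (w s t + s * q)) • Φ t ∂μ) :
    -- conclusion: `(w̃_s)_s` is a martingale with respect to `Q`
    ∀ s v : ℝ, 0 ≤ s → s < v → v ≤ S →
      ∀ E : Set T,
        MeasurableSet[⨆ r ∈ Set.Icc (0 : ℝ) s,
          MeasurableSpace.comap (w r) inferInstance] E →
        ∫ t in E, ((w v t + v * q) * g S (w S t + S * q)) • Φ t ∂μ =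
          ∫ t in E, ((w s t + s * q) * g S (w S t + S * q)) • Φ t ∂μ :=
  statement9_general μ Φ S q w hw hwb g hint hint' hmart hmart'
end
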